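/- arXiv:2011.01206 — 2 statements merged into one kernel-verified Lean document; each statement's English description precedes it below -/
import Mathlib

section
/- Let k_xy, k_yx, k_yz, k_zy, k_out, p, q, r be positive real numbers and x_in > 0. Define x_st = √((x_in/(k_xy·p))·(1 + (k_yx/k_yz)·(1 + k_zy/k_out))), y_st = √((x_in/(k_yz·q))·(1 + k_zy/k_out)), z_st = √(x_in/(k_out·r)). Then (x_st, y_st, z_st) is a fixed point of the map Φ1, i.e. Φ1(x_st, y_st, z_st) = (x_st, y_st, z_st). -/
/-!
At a fixed point the net flux across each of the three boundaries (level 1 → 2, level 2 → 3,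
level 3 → out) must equal the inflow `xin`. These balance equations are linear in the squares
`x ^ 2, y ^ 2, z ^ 2`, and solving them from the outlet upwards gives the stated stationary point.
-/

/-- The three-level filter model map `Φ1 : ℝ³ → ℝ³`. -/
def Phi1 (kxy kyx kyz kzy kout p q r xin : ℝ) :
    ℝ × ℝ × ℝ → ℝ × ℝ × ℝ :=
  fun ⟨x, y, z⟩ =>
    ( x - kxy * p * x ^ 2 + kyx * q * y ^ 2 + xin,
      y + kxy * p * x ^ 2 - (kyx + kyz) * q * y ^ 2 + kzy * r * z ^ 2,
      z + kyz * q * y ^ 2 - (kzy + kout) * r * z ^ 2 )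

theorem Phi1_eq_self_of_flux_balance {kxy kyx kyz kzy kout p q r xin x y z : ℝ}
    (hxy : kxy * p * x ^ 2 - kyx * q * y ^ 2 = xin)
    (hyz : kyz * q * y ^ 2 - kzy * r * z ^ 2 = xin)
    (hout : kout * r * z ^ 2 = xin) :
    Phi1 kxy kyx kyz kzy kout p q r xin (x, y, z) = (x, y, z) := by
  simp only [Phi1, Prod.mk.injEq]
  exact ⟨by linear_combination -hxy, by linear_combination hxy - hyz,
    by linear_combination hyz - hout⟩

theorem stationary_point_is_fixed
    (kxy kyx kyz kzy kout p q r xin : ℝ)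
    (hkxy : 0 < kxy) (hkyx : 0 < kyx) (hkyz : 0 < kyz) (hkzy : 0 < kzy)
    (hkout : 0 < kout) (hp : 0 < p) (hq : 0 < q) (hr : 0 < r) (hxin : 0 < xin) :
    Phi1 kxy kyx kyz kzy kout p q r xin
      ( Real.sqrt ((xin / (kxy * p)) * (1 + (kyx / kyz) * (1 + kzy / kout))),
        Real.sqrt ((xin / (kyz * q)) * (1 + kzy / kout)),
        Real.sqrt (xin / (kout * r)) ) =
      ( Real.sqrt ((xin / (kxy * p)) * (1 + (kyx / kyz) * (1 + kzy / kout))),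
        Real.sqrt ((xin / (kyz * q)) * (1 + kzy / kout)),
        Real.sqrt (xin / (kout * r)) ) := by
  apply Phi1_eq_self_of_flux_balance <;>
    simp only [Real.sq_sqrt (by positivity : (0 : ℝ) ≤ xin / (kout * r)),
      Real.sq_sqrt (by positivity : (0 : ℝ) ≤ xin / (kyz * q) * (1 + kzy / kout)),
      Real.sq_sqrt (by positivity :
        (0 : ℝ) ≤ xin / (kxy * p) * (1 + kyx / kyz * (1 + kzy / kout)))] <;>
    field_simp <;> ring
end

section
/- Let k_xy, k_yx, k_yz, k_zy, k_out, p, q, r be positive real numbers and x_in > 0. The map Φ1 has exactly one fixed point (x, y, z) with x ≥ 0, y ≥ 0 and z ≥ 0, namely x = √((x_in/(k_xy·p))·(1 + (k_yx/k_yz)·(1 + k_zy/k_out))), y = √((x_in/(k_yz·q))·(1 + k_zy/k_out)), z = √(x_in/(k_out·r)). -/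
lemma eq_sqrt_iff_sq_eq_and_nonneg {a t : ℝ} (ha : 0 ≤ a) : t = √a ↔ t ^ 2 = a ∧ 0 ≤ t := by
  constructor
  · rintro rfl
    exact ⟨Real.sq_sqrt ha, Real.sqrt_nonneg a⟩
  · rintro ⟨rfl, ht⟩
    exact (Real.sqrt_sq ht).symm

section Phi1

variable {kxy kyx kyz kzy kout p q r xin x y z : ℝ}

lemma Phi1_apply_eq_self_iff_flux_balance :
    Phi1 kxy kyx kyz kzy kout p q r xin (x, y, z) = (x, y, z) ↔
      kout * r * z ^ 2 = xin ∧
      kyz * q * y ^ 2 = xin + kzy * r * z ^ 2 ∧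
      kxy * p * x ^ 2 = xin + kyx * q * y ^ 2 := by
  simp only [Phi1, Prod.mk.injEq]
  constructor
  · rintro ⟨e1, e2, e3⟩
    exact ⟨by linear_combination -e1 - e2 - e3, by linear_combination -e1 - e2,
      by linear_combination -e1⟩
  · rintro ⟨hz, hy, hx⟩
    exact ⟨by linear_combination -hx, by linear_combination hx - hy,
      by linear_combination hy - hz⟩

lemma Phi1_apply_eq_self_iff_sq_eq (hkxy : kxy ≠ 0) (hkyz : kyz ≠ 0) (hkout : kout ≠ 0)
    (hp : p ≠ 0) (hq : q ≠ 0) (hr : r ≠ 0) :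
    Phi1 kxy kyx kyz kzy kout p q r xin (x, y, z) = (x, y, z) ↔
      x ^ 2 = xin / (kxy * p) * (1 + kyx / kyz * (1 + kzy / kout)) ∧
      y ^ 2 = xin / (kyz * q) * (1 + kzy / kout) ∧
      z ^ 2 = xin / (kout * r) := by
  rw [Phi1_apply_eq_self_iff_flux_balance]
  constructor
  · rintro ⟨hz, hy, hx⟩
    refine ⟨?_, ?_, ?_⟩ <;> field_simp
    · linear_combination kyz * kout * hx + kyx * kout * hy + kyx * kzy * hz
    · linear_combination kout * hy + kzy * hz
    · linear_combination hz
  · rintro ⟨hx, hy, hz⟩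
    rw [hx, hy, hz]
    refine ⟨?_, ?_, ?_⟩ <;> field_simp

end Phi1

theorem unique_nonneg_fixed_point_Phi1
    (kxy kyx kyz kzy kout p q r xin : ℝ)
    (hkxy : 0 < kxy) (hkyx : 0 < kyx) (hkyz : 0 < kyz) (hkzy : 0 < kzy)
    (hkout : 0 < kout) (hp : 0 < p) (hq : 0 < q) (hr : 0 < r) (hxin : 0 < xin)
    (x y z : ℝ) :
    (Phi1 kxy kyx kyz kzy kout p q r xin (x, y, z) = (x, y, z) ∧
      0 ≤ x ∧ 0 ≤ y ∧ 0 ≤ z) ↔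
    (x = Real.sqrt ((xin / (kxy * p)) * (1 + (kyx / kyz) * (1 + kzy / kout))) ∧
     y = Real.sqrt ((xin / (kyz * q)) * (1 + kzy / kout)) ∧
     z = Real.sqrt (xin / (kout * r))) := by
  rw [Phi1_apply_eq_self_iff_sq_eq hkxy.ne' hkyz.ne' hkout.ne' hp.ne' hq.ne' hr.ne',
    eq_sqrt_iff_sq_eq_and_nonneg (by positivity), eq_sqrt_iff_sq_eq_and_nonneg (by positivity),
    eq_sqrt_iff_sq_eq_and_nonneg (by positivity)]
  tauto
end
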